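/- arXiv:1901.10633 — 8 statements merged into one kernel-verified Lean document; each statement's English description precedes it below -/
import Mathlib

section
/- For any string w and position i with 1 ≤ i < |w|, let j = min { k > i : w[k..|w|] ≺ w[i..|w|] } (which exists assuming a sentinel smaller than all suffixes at position |w|+1, or assuming such k exists). Then the substring w[i..j-1] is a Lyndon word with respect to ≺. -/
/-- A string (list) is a Lyndon word w.r.t. the lexicographic order:
it is strictly smaller than every nonempty proper suffix. -/
def IsLyndon {α : Type*} [LinearOrder α] (w : List α) : Prop :=
  w ≠ [] ∧ ∀ i, 0 < i → i < w.length → List.Lex (· < ·) w (w.drop i)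

/-- `substr w i j` is the substring `w[i..j]` (1-indexed, inclusive). -/
def substr {α : Type*} (w : List α) (i j : ℕ) : List α :=
  (w.drop (i - 1)).take (j - i + 1)

private lemma lex_append_left {α : Type*} {r : α → α → Prop} {x y : List α} (c : List α)
    (h : List.Lex r x y) : List.Lex r (c ++ x) (c ++ y) := by
  induction c with
  | nil => exact h
  | cons a c ih => exact List.Lex.cons ih

private lemma lex_decomp {α : Type*} [LinearOrder α] {A B : List α}
    (h : List.Lex (· < ·) A B) :
    (∃ s, A ++ s = B ∧ s ≠ []) ∨
      ∃ (p : List α) (c c' : α) (A' B' : List α),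
        c < c' ∧ A = p ++ c :: A' ∧ B = p ++ c' :: B' := by
  induction h with
  | @nil a l => exact Or.inl ⟨a :: l, rfl, by simp⟩
  | @cons a l₁ l₂ h ih =>
    rcases ih with ⟨s, hs, hsne⟩ | ⟨p, c, c', A', B', hcc, hA, hB⟩
    · exact Or.inl ⟨s, by simp [hs], hsne⟩
    · exact Or.inr ⟨a :: p, c, c', A', B', hcc, by simp [hA], by simp [hB]⟩
  | @rel a l₁ b l₂ h => exact Or.inr ⟨[], a, b, l₁, l₂, h, rfl, rfl⟩

private lemma lex_of_not_lex {α : Type*} [LinearOrder α] {A B : List α}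
    (h : ¬ List.Lex (· < ·) B A) (hne : A ≠ B) : List.Lex (· < ·) A B := by
  rcases lt_trichotomy A B with h1 | h1 | h1
  · exact h1
  · exact absurd h1 hne
  · exact absurd h1 h

/-- If `j = min { k > i : w[k..|w|] ≺ w[i..|w|] }`, then `w[i..j-1]` is a Lyndon word. -/
theorem stmt1 {α : Type*} [LinearOrder α] (w : List α) (i j : ℕ)
    (hi : 1 ≤ i) (hij : i < j) (hj : j ≤ w.length)
    (hlt : List.Lex (· < ·) (w.drop (j - 1)) (w.drop (i - 1)))
    (hmin : ∀ k, i < k → k < j → ¬ List.Lex (· < ·) (w.drop (k - 1)) (w.drop (i - 1))) :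
    IsLyndon (substr w i (j - 1)) := by
  set A : List α := w.drop (i - 1) with hA
  have hAlen : A.length = w.length - (i - 1) := by simp [hA]
  have hsub : substr w i (j - 1) = A.take (j - i) := by
    have : j - 1 - i + 1 = j - i := by omega
    simp [substr, this, hA]
  have hulen : (substr w i (j - 1)).length = j - i := by
    rw [hsub]; simp [hAlen]; omega
  constructor
  · intro hnil
    rw [hnil] at hulen; simp at hulen; omega
  intro t ht htlen
  rw [hulen] at htlen
  set k := i + t with hk
  have hik : i < k := by omega
  have hkj : k < j := by omega
  -- the dropped suffix of the substring is a prefix of the suffix at k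
  set Bk : List α := w.drop (k - 1) with hBk
  have hBklen : Bk.length = w.length - (k - 1) := by simp [hBk]
  have hdropt : (substr w i (j - 1)).drop t = Bk.take (j - k) := by
    rw [hsub, List.drop_take, hA, List.drop_drop, hBk,
      show i - 1 + t = k - 1 from by omega, show j - i - t = j - k from by omega]
  -- A is lexicographically smaller than Bk
  have hne : A ≠ Bk := by
    intro h
    have := congrArg List.length h
    rw [hAlen, hBklen] at this
    omega
  have hABk : List.Lex (· < ·) A Bk := lex_of_not_lex (hmin k hik hkj) hne
  rcases lex_decomp hABk with ⟨s, hs, _⟩ | ⟨p, c, c', A', B', hcc, hpA, hpB⟩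
  · -- A a proper prefix of Bk : impossible by lengths
    exfalso
    have := congrArg List.length hs
    simp [hAlen, hBklen] at this
    omega
  · by_cases hpl : p.length < j - k
    · -- the first difference is inside the substring
      rw [hdropt, hsub, hpA, hpB]
      rw [List.take_append, List.take_append,
        List.take_of_length_le (by omega : p.length ≤ j - i),
        List.take_of_length_le (by omega : p.length ≤ j - k)]
      have h1 : 0 < j - i - p.length := by omega
      have h2 : 0 < j - k - p.length := by omega
      rw [List.take_cons h1, List.take_cons h2]
      exact lex_append_left p (List.Lex.rel hcc)
    · -- the two suffixes agree on the first j - k characters: contradiction with hmin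
      exfalso
      push_neg at hpl
      set m := i + (j - k) with hm
      have him : i < m := by omega
      have hmj : m < j := by omega
      -- A = (Bk.take (j-k)) ++ w.drop (m-1)  and  Bk = (Bk.take (j-k)) ++ w.drop (j-1)
      have htake_eq : A.take (j - k) = Bk.take (j - k) := by
        rw [hpA, hpB, List.take_append, List.take_append]
        have : j - k - p.length = 0 := by omega
        simp [this]
      have hAsplit : A = Bk.take (j - k) ++ w.drop (m - 1) := by
        rw [← htake_eq]
        have : A.drop (j - k) = w.drop (m - 1) := by
          rw [hA, List.drop_drop]
          congr 1
          omega
        rw [← this, List.take_append_drop]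
      have hBsplit : Bk = Bk.take (j - k) ++ w.drop (j - 1) := by
        have : Bk.drop (j - k) = w.drop (j - 1) := by
          rw [hBk, List.drop_drop]
          congr 1
          omega
        rw [← this, List.take_append_drop]
      have hmne : A ≠ w.drop (m - 1) := by
        intro h
        have := congrArg List.length h
        simp [hAlen] at this
        omega
      have hAm : List.Lex (· < ·) A (w.drop (m - 1)) :=
        lex_of_not_lex (hmin m him hmj) hmne
      have hjm : List.Lex (· < ·) (w.drop (j - 1)) (w.drop (m - 1)) := by
        have t1 : w.drop (j - 1) < A := hlt
        have t2 : A < w.drop (m - 1) := hAm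
        exact (t1.trans t2 : w.drop (j-1) < w.drop (m-1))
      have h3 := lex_append_left (Bk.take (j - k)) hjm
      rw [← hAsplit, ← hBsplit] at h3
      exact hmin k hik hkj h3
end

section
/- For any string w and position i with 1 ≤ i < |w|, if j = min { k > i : w[k..|w|] ≺ w[i..|w|] } exists, then w[i..j-1] is the longest Lyndon word starting at position i; that is, for every k ≥ j with k ≤ |w|, the substring w[i..k] is not a Lyndon word. -/
/-! A Lyndon factor `w[i..k]` is smaller than its suffix `w[j..k]`, which is shorter, so the
comparison is decided at a mismatch inside `w[j..k]`; the same mismatch then shows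
`w[i..] ≺ w[j..]`, which contradicts `w[j..] ≺ w[i..]`. -/

theorem List.Lex.of_isPrefix_of_length_le {α : Type*} {r : α → α → Prop} {x y : List α}
    (h : List.Lex r x y) (hlen : y.length ≤ x.length) {A B : List α}
    (hA : x <+: A) (hB : y <+: B) : List.Lex r A B := by
  induction h generalizing A B with
  | nil => simp at hlen
  | cons _ ih =>
    obtain ⟨t, rfl⟩ := hA
    obtain ⟨s, rfl⟩ := hB
    exact .cons (ih (by simpa using hlen) (List.prefix_append _ _) (List.prefix_append _ _))
  | rel hab =>
    obtain ⟨t, rfl⟩ := hA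
    obtain ⟨s, rfl⟩ := hB
    exact .rel hab

section Substr

variable {α : Type*} (w : List α) {i j k : ℕ}

theorem length_substr (hi : 1 ≤ i) (hik : i ≤ k) (hk : k ≤ w.length) :
    (substr w i k).length = k - i + 1 := by
  rw [substr, List.length_take, List.length_drop]
  omega

theorem drop_substr (hi : 1 ≤ i) (hij : i ≤ j) (hjk : j ≤ k) :
    (substr w i k).drop (j - i) = substr w j k := by
  rw [substr, substr, List.drop_take, List.drop_drop]
  congr 2 <;> omega

theorem substr_prefix_drop : substr w i k <+: w.drop (i - 1) :=
  List.take_prefix _ _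

end Substr

theorem lex_drop_of_isLyndon_substr {α : Type*} [LinearOrder α] {w : List α} {i j k : ℕ}
    (hi : 1 ≤ i) (hij : i < j) (hjk : j ≤ k) (hk : k ≤ w.length)
    (hL : IsLyndon (substr w i k)) :
    List.Lex (· < ·) (w.drop (i - 1)) (w.drop (j - 1)) := by
  have hlen := length_substr w hi (hij.le.trans hjk) hk
  have hsuffix : List.Lex (· < ·) (substr w i k) (substr w j k) := by
    rw [← drop_substr w hi hij.le hjk]
    exact hL.2 (j - i) (by omega) (by omega)
  refine hsuffix.of_isPrefix_of_length_le ?_ (substr_prefix_drop w) (substr_prefix_drop w)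
  rw [length_substr w (hi.trans hij.le) hjk hk]
  omega

theorem stmt2_general {α : Type*} [LinearOrder α] (w : List α) (i j : ℕ)
    (hi : 1 ≤ i) (hij : i < j)
    (hlt : List.Lex (· < ·) (w.drop (j - 1)) (w.drop (i - 1))) :
    ∀ k, j ≤ k → k ≤ w.length → ¬ IsLyndon (substr w i k) :=
  fun _ hjk hk hL => List.lt_asymm (lex_drop_of_isLyndon_substr hi hij hjk hk hL) hlt

/-- If `j = min { k > i : w[k..|w|] ≺ w[i..|w|] }` exists, then `w[i..j-1]` is the *longest*
Lyndon word starting at position `i`: for every `j ≤ k ≤ |w|`, `w[i..k]` is not Lyndon. -/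
theorem stmt2 {α : Type*} [LinearOrder α] (w : List α) (i j : ℕ)
    (hi : 1 ≤ i) (hij : i < j) (hj : j ≤ w.length)
    (hlt : List.Lex (· < ·) (w.drop (j - 1)) (w.drop (i - 1)))
    (hmin : ∀ k, i < k → k < j → ¬ List.Lex (· < ·) (w.drop (k - 1)) (w.drop (i - 1))) :
    ∀ k, j ≤ k → k ≤ w.length → ¬ IsLyndon (substr w i k) :=
  stmt2_general w i j hi hij hlt
end

section
/- If w[i..k] is a Lyndon word for some k, and j ≤ k is a position with i < j such that w[j..|w|] ≺ w[i..|w|], then a contradiction follows; equivalently, if w[i..k] is a Lyndon word then for all j with i < j ≤ k, w[i..|w|] ≺ w[j..|w|]. -/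
/-
A lexicographic comparison between `u` and a proper suffix `u.drop d` is decided at a position
inside the shorter word `u.drop d`, so it survives appending anything to either side. Since
`w[i..|w|]` extends `u = w[i..k]` and `w[j..|w|]` extends `u.drop (j - i)`, the Lyndon property
of `u` transfers to the suffixes of `w`.
-/

theorem List.Lex.append_of_length_le {α : Type*} {r : α → α → Prop} {s₁ s₂ : List α}
    (h : List.Lex r s₁ s₂) (hlen : s₂.length ≤ s₁.length) (t₁ t₂ : List α) :
    List.Lex r (s₁ ++ t₁) (s₂ ++ t₂) := by
  induction h with
  | nil => simp at hlen
  | cons _ ih => exact .cons (ih (by simpa using hlen))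
  | rel h => exact .rel h

theorem IsLyndon.lex_append_drop_append {α : Type*} [LinearOrder α] {u : List α}
    (hu : IsLyndon u) {d : ℕ} (hd₀ : 0 < d) (hd : d < u.length) (t₁ t₂ : List α) :
    List.Lex (· < ·) (u ++ t₁) (u.drop d ++ t₂) :=
  (hu.2 d hd₀ hd).append_of_length_le (by simp) t₁ t₂

theorem stmt3_general {α : Type*} [LinearOrder α] (w : List α) (i k : ℕ)
    (hi : 1 ≤ i) (hk : k ≤ w.length)
    (hLyn : IsLyndon (substr w i k)) :
    ∀ j, i < j → j ≤ k → List.Lex (· < ·) (w.drop (i - 1)) (w.drop (j - 1)) := by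
  intro j hij hjk
  set u := substr w i k
  set rest := (w.drop (i - 1)).drop (k - i + 1)
  have hu_len : u.length = k - i + 1 := by
    simp only [u, substr, List.length_take, List.length_drop]
    omega
  have hsplit : w.drop (i - 1) = u ++ rest := (List.take_append_drop _ _).symm
  have hsuffix : w.drop (j - 1) = u.drop (j - i) ++ rest := by
    rw [← List.drop_append_of_le_length (by omega), ← hsplit, List.drop_drop]
    congr 1
    omega
  rw [hsplit, hsuffix]
  exact hLyn.lex_append_drop_append (by omega) (by omega) rest rest

/-- If `w[i..k]` is a Lyndon word, then for all `j` with `i < j ≤ k`,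
`w[i..|w|] ≺ w[j..|w|]`. -/
theorem stmt3 {α : Type*} [LinearOrder α] (w : List α) (i k : ℕ)
    (hi : 1 ≤ i) (hik : i ≤ k) (hk : k ≤ w.length)
    (hLyn : IsLyndon (substr w i k)) :
    ∀ j, i < j → j ≤ k → List.Lex (· < ·) (w.drop (i - 1)) (w.drop (j - 1)) :=
  stmt3_general w i k hi hk hLyn
end

section
/- Let w be a string, r = [i..j] a run in w with smallest period p, and ≺ a lexicographic order such that w[j+1] ≺ w[j+1-p] (where w[|w|+1] is a sentinel character not occurring in w). Then any substring w[i'..j'] of r, of length p, that is a Lyndon word with respect to ≺ (an L-root), is the longest Lyndon word with respect to ≺ that is a prefix of w[i'..|w|]. -/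
/-- `p` is a period of `w`: `w[i] = w[i+p]` whenever both positions are valid. -/
def HasPeriod {α : Type*} (w : List α) (p : ℕ) : Prop :=
  ∀ i, i + p < w.length → w[i]? = w[i + p]?

/-- `[i..j]` (1-indexed) is a run of `w` with (smallest) period `p`:
`p` is the smallest period of `w[i..j]`, the exponent is at least 2, and the
periodicity with period `p` extends neither to the left nor to the right. -/
def IsRun {α : Type*} (w : List α) (i j p : ℕ) : Prop :=
  1 ≤ i ∧ i ≤ j ∧ j ≤ w.length ∧ 0 < p ∧
  HasPeriod (substr w i j) p ∧
  (∀ q, 0 < q → q < p → ¬ HasPeriod (substr w i j) q) ∧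
  2 * p ≤ j - i + 1 ∧
  (i = 1 ∨ ¬ HasPeriod (substr w (i - 1) j) p) ∧
  (j = w.length ∨ ¬ HasPeriod (substr w i (j + 1)) p)

namespace HasPeriod

variable {α : Type*} {w : List α} {p : ℕ}

theorem take (h : HasPeriod w p) (n : ℕ) : HasPeriod (w.take n) p := by
  intro k hk
  simp only [List.length_take] at hk
  rw [List.getElem?_take_of_lt (by omega), List.getElem?_take_of_lt (by omega)]
  exact h k (by omega)

theorem drop (h : HasPeriod w p) (n : ℕ) : HasPeriod (w.drop n) p := by
  intro k hk
  simp only [List.length_drop] at hk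
  rw [List.getElem?_drop, List.getElem?_drop, ← Nat.add_assoc]
  exact h (n + k) (by omega)

theorem drop_eq_take (h : HasPeriod w p) : w.drop p = w.take (w.length - p) := by
  apply List.ext_getElem?
  intro k
  rw [List.getElem?_drop]
  by_cases hk : k < w.length - p
  · rw [List.getElem?_take_of_lt hk, h k (by omega), Nat.add_comm]
  · rw [List.getElem?_eq_none (by omega),
      List.getElem?_eq_none (by simp only [List.length_take]; omega)]

theorem substr_of_le {i j i' : ℕ} (h : HasPeriod (substr w i j) p) (hi : 1 ≤ i)
    (hii' : i ≤ i') (hi'j : i' ≤ j) : HasPeriod (substr w i' j) p := by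
  have hsub : substr w i' j = (substr w i j).drop (i' - i) := by
    simp only [substr, List.drop_take, List.drop_drop]
    congr 2 <;> omega
  rw [hsub]
  exact h.drop _

end HasPeriod

namespace IsLyndon

variable {α : Type*} [LinearOrder α] {u : List α} {p : ℕ}

theorem not_hasPeriod (hu : IsLyndon u) (hp : 0 < p) (hpu : p < u.length) :
    ¬ HasPeriod u p := fun hper =>
  (List.take_prefix _ u).le (hper.drop_eq_take ▸ hu.2 p hp hpu)

theorem le_getElem_of_hasPeriod_take {n : ℕ} (hu : IsLyndon u) (hp : 0 < p) (hpn : p ≤ n)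
    (hn : n < u.length) (hper : HasPeriod (u.take n) p) : u[n - p] ≤ u[n] := by
  by_contra! hlt
  have hshift : u.drop p < u := by
    refine List.lt_iff_exists.2 (Or.inr ⟨n - p, by simp only [List.length_drop]; omega,
      by omega, fun k hk => ?_, by simpa [Nat.add_sub_cancel' hpn] using hlt⟩)
    have hk' := hper k (by simp only [List.length_take]; omega)
    rw [List.getElem?_take_of_lt (by omega), List.getElem?_take_of_lt (by omega),
      List.getElem?_eq_getElem (by omega), List.getElem?_eq_getElem (by omega)] at hk'
    simp only [List.getElem_drop, Option.some.injEq] at hk' ⊢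
    rw [hk']
    congr 1
    omega
  exact lt_asymm (hu.2 p hp (by omega)) hshift

end IsLyndon

theorem stmt5_general {α : Type*} [LinearOrder α] [Inhabited α] (w : List α) (i j p : ℕ)
    (hrun : IsRun w i j p) (hj : j < w.length)
    (hord : w.getD j default < w.getD (j - p) default) :
    ∀ i' j', i ≤ i' → j' ≤ j → j' + 1 = i' + p →
      IsLyndon (substr w i' j') →
      ∀ m, p < m → m ≤ w.length - (i' - 1) →
        ¬ IsLyndon ((w.drop (i' - 1)).take m) := by
  obtain ⟨hi, -, -, hp, hper, -⟩ := hrun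
  intro i' j' hii' hj'j hroot _ m hpm hm hlyn
  have hroot_per : HasPeriod (substr w i' j) p := hper.substr_of_le hi hii' (by omega)
  set v := w.drop (i' - 1)
  rcases le_or_gt m (j - i' + 1) with hmn | hnm
  · refine hlyn.not_hasPeriod hp (by simp only [v, List.length_take, List.length_drop]; omega) ?_
    simpa [substr, List.take_take, min_eq_left hmn] using hroot_per.take m
  · refine not_lt_of_ge (hlyn.le_getElem_of_hasPeriod_take hp (n := j - i' + 1) (by omega)
      (by simp only [v, List.length_take, List.length_drop]; omega) ?_) ?_
    · simpa [substr, List.take_take, min_eq_left hnm.le] using hroot_per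
    · simp only [List.getD_eq_getElem?_getD, List.getElem?_eq_getElem hj,
        List.getElem?_eq_getElem (show j - p < w.length by omega), Option.getD_some] at hord
      simp only [v, List.getElem_take, List.getElem_drop]
      convert hord using 2 <;> omega

/-- Lemma 3.3 of the "Runs" theorem paper: if `[i..j]` is a run of `w` with period `p`
and `w[j+1] ≺ w[j+1-p]` (the last character of `w` acts as a sentinel not occurring
elsewhere), then any L-root `w[i'..j']` (length-`p` Lyndon factor of the run) is the
longest Lyndon word that is a prefix of `w[i'..|w|]`. -/
theorem stmt5 {α : Type*} [LinearOrder α] [Inhabited α] (w : List α) (i j p : ℕ)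
    (hrun : IsRun w i j p) (hj : j < w.length)
    (hsent : ∀ m, m + 1 < w.length → w.getD m default ≠ w.getD (w.length - 1) default)
    (hord : w.getD j default < w.getD (j - p) default) :
    ∀ i' j', i ≤ i' → j' ≤ j → j' + 1 = i' + p →
      IsLyndon (substr w i' j') →
      ∀ m, p < m → m ≤ w.length - (i' - 1) →
        ¬ IsLyndon ((w.drop (i' - 1)).take m) :=
  stmt5_general w i j p hrun hj hord
end

section
/- For any position i of a string w with 1 ≤ i ≤ |w|, let k = min { k' > i : w[k'] ≠ w[i] } (assuming a sentinel distinct character at position |w|+1) and let ℓ ∈ {0,1} be such that w[k] ≺_ℓ w[i]. Then the longest Lyndon word with respect to ≺_ℓ that starts at position i is the single character w[i..i], and the longest Lyndon word with respect to the opposite order ≺_{1-ℓ} starting at position i has length at least k - i + 1 (i.e., it is w[i..j] for some j ≥ k). -/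
/-- A string is a Lyndon word w.r.t. an order `lt` on the alphabet:
it is (lexicographically) strictly smaller than every nonempty proper suffix. -/
def IsLyndonWrt {α : Type*} (lt : α → α → Prop) (w : List α) : Prop :=
  w ≠ [] ∧ ∀ i, 0 < i → i < w.length → List.Lex lt w (w.drop i)

/-- The two opposite alphabet orders `≺₀` (the given one) and `≺₁` (its reverse). -/
def ltOrd {α : Type*} [LinearOrder α] : Bool → α → α → Prop
  | false, a, b => a < b
  | true,  a, b => b < a

namespace Stmt7Aux

variable {α : Type*}

lemma not_lex_nil {lt : α → α → Prop} {l : List α} : ¬ List.Lex lt l [] := by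
  intro h; cases h

lemma lex_asymm {lt : α → α → Prop} (h : ∀ x y, lt x y → ¬ lt y x)
    {l l' : List α} (hll : List.Lex lt l l') : ¬ List.Lex lt l' l := by
  induction hll with
  | nil => exact not_lex_nil
  | cons _ ih =>
      intro h2
      cases h2 with
      | cons h3 => exact ih h3
      | rel h3 => exact h _ _ h3 h3
  | rel hab =>
      intro h2
      cases h2 with
      | cons h3 => exact h _ _ hab hab
      | rel h3 => exact h _ _ hab h3

lemma lex_rep {lt : α → α → Prop} {a : α} : ∀ q r : ℕ, q < r →
    List.Lex lt (List.replicate q a) (List.replicate r a)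
  | 0, r+1, _ => by
      simp only [List.replicate_succ, List.replicate_zero]
      exact List.Lex.nil
  | q+1, r+1, h => by
      simp only [List.replicate_succ]
      exact List.Lex.cons (lex_rep q r (by omega))

lemma lex_aux1 {lt : α → α → Prop} {a b : α} (h : lt b a) : ∀ q r (t t' : List α), q < r →
    List.Lex lt (List.replicate q a ++ b :: t) (List.replicate r a ++ t')
  | 0, r+1, t, t', _ => by
      simp only [List.replicate_succ, List.replicate_zero, List.nil_append, List.cons_append]
      exact List.Lex.rel h
  | q+1, r+1, t, t', hqr => by
      simp only [List.replicate_succ, List.cons_append]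
      exact List.Lex.cons (lex_aux1 h q r t t' (by omega))

lemma lex_aux2 {lt : α → α → Prop} {a b : α} (h : lt a b) : ∀ q r (t t' : List α), q < r →
    List.Lex lt (List.replicate r a ++ t) (List.replicate q a ++ b :: t')
  | 0, r+1, t, t', _ => by
      simp only [List.replicate_succ, List.replicate_zero, List.nil_append, List.cons_append]
      exact List.Lex.rel h
  | q+1, r+1, t, t', hqr => by
      simp only [List.replicate_succ, List.cons_append]
      exact List.Lex.cons (lex_aux2 h q r t t' (by omega))

lemma ltOrd_flip {β : Type*} [LinearOrder β] {ℓ : Bool} {x y : β} (h : ltOrd ℓ x y) :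
    ltOrd (!ℓ) y x := by cases ℓ <;> exact h

lemma ltOrd_asymm {β : Type*} [LinearOrder β] (ℓ : Bool) :
    ∀ x y : β, ltOrd ℓ x y → ¬ ltOrd ℓ y x := by
  cases ℓ <;> intro x y h <;> exact lt_asymm h

end Stmt7Aux

open Stmt7Aux in
/-- Lemma 3.2 of the "Runs" theorem paper: let `k = min {k' > i : w[k'] ≠ w[i]}`
(assumed to exist, 1-indexed) and `ℓ` be such that `w[k] ≺_ℓ w[i]`. Then the longest
Lyndon word w.r.t. `≺_ℓ` starting at `i` is the single character `w[i..i]`, and the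
longest Lyndon word w.r.t. `≺_{1-ℓ}` starting at `i` has length at least `k - i + 1`. -/
theorem stmt7 {α : Type*} [LinearOrder α] [Inhabited α] (w : List α) (i k : ℕ) (ℓ : Bool)
    (hi : 1 ≤ i) (hik : i < k) (hk : k ≤ w.length)
    (hne : w.getD (k - 1) default ≠ w.getD (i - 1) default)
    (hmin : ∀ k', i < k' → k' < k → w.getD (k' - 1) default = w.getD (i - 1) default)
    (hℓ : ltOrd ℓ (w.getD (k - 1) default) (w.getD (i - 1) default)) :
    (∀ m, 1 < m → m ≤ w.length - (i - 1) →
      ¬ IsLyndonWrt (ltOrd ℓ) ((w.drop (i - 1)).take m)) ∧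
    (∃ m, k - i + 1 ≤ m ∧ m ≤ w.length - (i - 1) ∧
      IsLyndonWrt (ltOrd (!ℓ)) ((w.drop (i - 1)).take m)) := by
  set a := w.getD (i - 1) default with ha
  set b := w.getD (k - 1) default with hb
  set p := k - i with hp
  have hp1 : 1 ≤ p := by omega
  have hi1 : i - 1 < w.length := by omega
  have hk1 : k - 1 < w.length := by omega
  have hel : ∀ j, j < p → i - 1 + j < w.length → ∀ (h : i - 1 + j < w.length),
      w[i - 1 + j]'h = a := by
    intro j hj _ h
    rcases Nat.eq_zero_or_pos j with rfl | hj0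
    · rw [ha]; simpa using (List.getD_eq_getElem w default hi1).symm
    · have h2 := hmin (i + j) (by omega) (by omega)
      rw [List.getD_eq_getElem w default (by omega : i + j - 1 < w.length)] at h2
      have : i + j - 1 = i - 1 + j := by omega
      simp only [this] at h2
      exact h2
  have hbel : ∀ (h : k - 1 < w.length), w[k - 1]'h = b := by
    intro h; rw [hb, List.getD_eq_getElem w default hk1]
  have hlen : ∀ m, m ≤ w.length - (i - 1) → ((w.drop (i - 1)).take m).length = m := by
    intro m hm; simp only [List.length_take, List.length_drop]; omega
  have hshape1 : ∀ m, m ≤ p → (w.drop (i - 1)).take m = List.replicate m a := by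
    intro m hm
    apply List.ext_getElem
    · simp only [List.length_take, List.length_drop, List.length_replicate]; omega
    · intro j h1 h2
      simp only [List.getElem_take, List.getElem_drop, List.getElem_replicate]
      have hj : j < m := by simpa using h2
      exact hel j (by omega) (by omega) _
  have hshape2 : (w.drop (i - 1)).take (p + 1) = List.replicate p a ++ [b] := by
    apply List.ext_getElem
    · simp only [List.length_take, List.length_drop, List.length_append,
        List.length_replicate, List.length_cons, List.length_nil]; omega
    · intro j h1 h2
      simp only [List.getElem_take, List.getElem_drop]
      rcases lt_or_eq_of_le (Nat.lt_succ_iff.mp (by simpa using h2)) with hjp | hjp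
      · rw [List.getElem_append_left (by simpa using hjp), List.getElem_replicate]
        exact hel j hjp (by omega) _
      · subst hjp
        rw [List.getElem_append_right (by simp)]
        simp only [List.length_replicate, Nat.sub_self, List.getElem_cons_zero]
        have : i - 1 + p = k - 1 := by omega
        simp only [this]
        exact hbel _
  have hab : ltOrd (!ℓ) a b := ltOrd_flip hℓ
  constructor
  · intro m hm1 hm2 hLyn
    obtain ⟨-, hsuf⟩ := hLyn
    have hlex := hsuf 1 (by norm_num) (by rw [hlen m hm2]; omega)
    by_cases hmp : m ≤ p
    · rw [hshape1 m hmp, List.drop_replicate] at hlex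
      exact lex_asymm (ltOrd_asymm ℓ) (lex_rep (m - 1) m (by omega)) hlex
    · set rest := ((w.drop (i - 1)).take m).drop (p + 1) with hrest
      have hsplit : (w.drop (i - 1)).take m = List.replicate p a ++ b :: rest := by
        conv_lhs => rw [← List.take_append_drop (p + 1) ((w.drop (i - 1)).take m)]
        rw [List.take_take, min_eq_left (by omega), hshape2, ← hrest]
        simp
      rw [hsplit] at hlex
      have hdrop : (List.replicate p a ++ b :: rest).drop 1 =
          List.replicate (p - 1) a ++ b :: rest := by
        rw [List.drop_append, List.drop_replicate,
          List.length_replicate, Nat.sub_eq_zero_of_le hp1, List.drop_zero]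
      rw [hdrop] at hlex
      exact lex_asymm (ltOrd_asymm ℓ)
        (lex_aux1 hℓ (p - 1) p rest (b :: rest) (by omega)) hlex
  · refine ⟨p + 1, by omega, by omega, ?_⟩
    rw [hshape2]
    constructor
    · simp
    · intro d hd0 hdlen
      have hdp : d ≤ p := by
        simp only [List.length_append, List.length_replicate, List.length_cons,
          List.length_nil] at hdlen
        omega
      have hdrop : (List.replicate p a ++ [b]).drop d = List.replicate (p - d) a ++ [b] := by
        rw [List.drop_append, List.drop_replicate, List.length_replicate,
          Nat.sub_eq_zero_of_le hdp, List.drop_zero]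
      rw [hdrop]
      exact lex_aux2 hab (p - d) p [b] [] (by omega)
end

section
/- The number of runs in any string of length n is at most 2n. -/
/-!
Call a run *low* if the letter just after it (if any) is smaller than the letter `p` positions
earlier. The minimal rotation of the period of a low run is a Lyndon word, and it occurs inside
the run at some position `t` (its L-root). Any longer word starting at `t` is not Lyndon: either
it still has period `p`, or its suffix starting `p` letters in wins the comparison at the letter
after the run. So `p` is the length of the longest Lyndon prefix of `w.drop t`, and the run, being
the maximal `p`-periodic interval around `[t, t + p)`, is determined by `t`. Runs that are not low
are low for the reversed order, so there are at most `n` runs of each kind.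
-/

namespace List

variable {α : Type*}

/-- A word is primitive (not a proper power) iff no nontrivial rotation fixes it. -/
def IsPrimitive (u : List α) : Prop :=
  ∀ k, 0 < k → k < u.length → u.rotate k ≠ u

theorem IsPrimitive.rotate {u : List α} (hu : u.IsPrimitive) (d : ℕ) :
    (u.rotate d).IsPrimitive := by
  intro k hk hku h
  rw [length_rotate] at hku
  rw [rotate_rotate, Nat.add_comm, ← rotate_rotate, rotate_eq_rotate] at h
  exact hu k hk hku h

variable [LinearOrder α]

theorem append_lt_of_lt_of_not_prefix {l₁ l₂ : List α} (h : l₁ < l₂) (hp : ¬ l₁ <+: l₂)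
    (l₃ : List α) : l₁ ++ l₃ < l₂ := by
  induction h with
  | nil => exact absurd nil_prefix hp
  | rel hab => exact Lex.rel hab
  | cons _ ih => exact Lex.cons (ih fun h => hp (cons_prefix_cons.mpr ⟨rfl, h⟩))

theorem lt_of_getElem?_eq_of_lt {l₁ l₂ : List α} {r : ℕ} (h : ∀ x < r, l₁[x]? = l₂[x]?)
    {a b : α} (ha : l₁[r]? = some a) (hb : l₂[r]? = some b) (hab : a < b) : l₁ < l₂ := by
  obtain ⟨hr₁, rfl⟩ := getElem?_eq_some_iff.1 ha
  obtain ⟨hr₂, rfl⟩ := getElem?_eq_some_iff.1 hb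
  refine List.lt_iff_exists.2 (.inr ⟨r, hr₁, hr₂, fun x hx => ?_, hab⟩)
  simpa [getElem?_eq_getElem (hx.trans hr₁), getElem?_eq_getElem (hx.trans hr₂)] using h x hx

theorem drop_lt_self_of_hasPeriod {l : List α} {p : ℕ} (h : _root_.HasPeriod l p) (hp : 0 < p)
    (hpl : p ≤ l.length) : l.drop p < l := by
  have hborder : l.drop p <+: l :=
    (hasPeriod_iff_getElem?.2 fun i hi => h i (by omega)).drop_prefix p
  exact lt_of_le_of_ne (not_lt.1 hborder.le) fun h => by
    have := congrArg length h
    simp at this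
    omega

def IsLyndon (u : List α) : Prop :=
  ∀ m, 0 < m → m < u.length → u < u.drop m

theorem IsPrimitive.isLyndon_of_forall_le_rotate {u : List α} (hu : u.IsPrimitive)
    (hmin : ∀ k, u ≤ u.rotate k) : u.IsLyndon := by
  -- With `u = r ++ s`, a suffix `s ≤ u` either is not a prefix of `u`, and then the rotation
  -- `s ++ r` is `< u`, or `u = s ++ c`, and then `s ++ r > u` forces `c < r`, so that the
  -- rotation `c ++ s` is `< r ++ s = u`.
  intro m hm hmu
  set r := u.take m
  set s := u.drop m
  have hsplit : r ++ s = u := take_append_drop m u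
  have hrlen : r.length = m := by simp [r]; omega
  have hsr : u < s ++ r := by
    rw [← rotate_eq_drop_append_take hmu.le]
    exact lt_of_le_of_ne (hmin m) (hu m hm hmu).symm
  by_contra hus
  have hsu : s < u := lt_of_le_of_ne (not_lt.1 hus) fun h => by
    have := congrArg length h
    simp [s] at this
    omega
  by_cases hpre : s <+: u
  · obtain ⟨c, hc⟩ := hpre
    have hclen : c.length = m := by
      have := congrArg length (hc.trans hsplit.symm)
      simp only [length_append] at this
      omega
    have hcr : c < r := by
      by_contra hrc
      rw [← hc] at hsr
      exact append_left_le hrc hsr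
    have hnp : ¬ c <+: r := fun h => hcr.ne (h.eq_of_length (hclen.trans hrlen.symm))
    have hcs : c ++ s < u := calc
      c ++ s < r := append_lt_of_lt_of_not_prefix hcr hnp s
      _ ≤ r ++ s := not_lt.1 le_append_left
      _ = u := hsplit
    have hrot := hmin s.length
    rw [← hc, rotate_append_length_eq] at hrot
    exact not_lt.2 hrot (hc ▸ hcs)
  · exact lt_asymm hsr (append_lt_of_lt_of_not_prefix hsu hpre r)

theorem IsLyndon.not_hasPeriod {u : List α} (hu : u.IsLyndon) {p : ℕ} (hp : 0 < p)
    (hpu : p < u.length) : ¬ _root_.HasPeriod u p := fun h =>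
  lt_asymm (hu p hp hpu) (drop_lt_self_of_hasPeriod h hp hpu.le)

theorem IsLyndon.not_lt_of_hasPeriod_take {u : List α} (hu : u.IsLyndon) {p D : ℕ} (hp : 0 < p)
    (hpD : p ≤ D) (hD : _root_.HasPeriod (u.take D) p) {a b : α} (ha : u[D]? = some a)
    (hb : u[D - p]? = some b) : ¬ a < b := by
  intro hab
  have hDu : D < u.length := (getElem?_eq_some_iff.1 ha).1
  refine lt_asymm (hu p hp (by omega)) (lt_of_getElem?_eq_of_lt (r := D - p) (fun x hx => ?_)
    (by rwa [getElem?_drop, Nat.add_sub_cancel' hpD]) hb hab)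
  have := hD x (by simp; omega)
  rwa [getElem?_take_of_lt (by omega), getElem?_take_of_lt (by omega), Nat.add_comm x p,
    eq_comm, ← getElem?_drop] at this

noncomputable def lyndonPrefixLength (u : List α) : ℕ :=
  open Classical in Nat.findGreatest (fun ℓ => (u.take ℓ).IsLyndon) u.length

theorem lyndonPrefixLength_eq {u : List α} {ℓ : ℕ} (hℓ : ℓ ≤ u.length)
    (hly : (u.take ℓ).IsLyndon) (hmax : ∀ m, ℓ < m → m ≤ u.length → ¬ (u.take m).IsLyndon) :
    u.lyndonPrefixLength = ℓ := by
  classical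
  exact Nat.findGreatest_eq_iff.2 ⟨hℓ, fun _ => hly, fun m h₁ h₂ => hmax m h₁ h₂⟩

end List

section Periodicity

variable {α : Type*}

def PeriodicOn (w : List α) (s e p : ℕ) : Prop :=
  ∀ x, s ≤ x → x + p < e → w[x]? = w[x + p]?

theorem PeriodicOn.mono {w : List α} {s e s' e' p : ℕ} (h : PeriodicOn w s e p) (hs : s ≤ s')
    (he : e' ≤ e) : PeriodicOn w s' e' p :=
  fun x hx hxe => h x (hs.trans hx) (hxe.trans_le he)

theorem hasPeriod_drop_take_iff {w : List α} {s ℓ p : ℕ} :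
    HasPeriod ((w.drop s).take ℓ) p ↔ PeriodicOn w s (min (s + ℓ) w.length) p := by
  have hget : ∀ x, x < ℓ → ((w.drop s).take ℓ)[x]? = w[s + x]? := fun x hx => by
    rw [List.getElem?_take_of_lt hx, List.getElem?_drop]
  have hlen : ((w.drop s).take ℓ).length = min (s + ℓ) w.length - s := by
    simp only [List.length_take, List.length_drop]; omega
  constructor
  · intro h x hsx hxe
    have := h (x - s) (by omega)
    rwa [hget _ (by omega), hget _ (by omega), Nat.add_sub_cancel' hsx,
      show s + (x - s + p) = x + p by omega] at this
  · intro h x hx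
    rw [hget _ (by omega), hget _ (by omega), ← Nat.add_assoc]
    exact h (s + x) (by omega) (by omega)

theorem hasPeriod_substr_iff {w : List α} {i j p : ℕ} (hi : 1 ≤ i) (hij : i ≤ j) :
    HasPeriod (substr w i j) p ↔ PeriodicOn w (i - 1) (min j w.length) p := by
  rw [substr, hasPeriod_drop_take_iff, show i - 1 + (j - i + 1) = j by omega]

theorem PeriodicOn.getElem?_add_mul {w : List α} {s e p x : ℕ} (h : PeriodicOn w s e p)
    (hsx : s ≤ x) (k : ℕ) (hk : x + k * p < e) : w[x + k * p]? = w[x]? := by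
  induction k with
  | zero => simp
  | succ k ih =>
    rw [Nat.add_one_mul, ← Nat.add_assoc] at hk ⊢
    rw [← h _ (by omega) hk, ih (by omega)]

theorem PeriodicOn.getElem?_add_mod {w : List α} {s e p m : ℕ} (h : PeriodicOn w s e p)
    (hm : s + m < e) : w[s + m]? = w[s + m % p]? := by
  have := h.getElem?_add_mul (Nat.le_add_right s (m % p)) (m / p)
  rw [Nat.add_assoc, Nat.mod_add_div' m p] at this
  exact this hm

theorem PeriodicOn.drop_take_eq_rotate {w : List α} {s e p d : ℕ} (h : PeriodicOn w s e p)
    (hd : d < p) (hde : s + d + p ≤ e) (he : e ≤ w.length) :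
    (w.drop (s + d)).take p = ((w.drop s).take p).rotate d := by
  have hlen : ((w.drop s).take p).length = p := by simp; omega
  apply List.ext_getElem?
  intro x
  rcases lt_or_ge x p with hx | hx
  · rw [List.getElem?_take_of_lt hx, List.getElem?_drop, List.getElem?_rotate (by omega), hlen,
      List.getElem?_take_of_lt (Nat.mod_lt _ (by omega)), List.getElem?_drop, Nat.add_assoc,
      h.getElem?_add_mod (by omega), Nat.add_comm d x]
  · rw [List.getElem?_eq_none (by simp; omega), List.getElem?_eq_none (by simp; omega)]

theorem PeriodicOn.isPrimitive_drop_take {w : List α} {s e p : ℕ} (h : PeriodicOn w s e p)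
    (hmin : ∀ q, 0 < q → q < p → ¬ PeriodicOn w s e q) (hpe : s + p ≤ e) (he : e ≤ w.length) :
    ((w.drop s).take p).IsPrimitive := by
  set u := (w.drop s).take p
  have hlen : u.length = p := by simp [u]; omega
  intro d hd hdp hrot
  have hu : ∀ x, s ≤ x → x < e → w[x]? = u[(x - s) % p]? := fun x hsx hxe => by
    rw [List.getElem?_take_of_lt (Nat.mod_lt _ (by omega)), List.getElem?_drop,
      ← h.getElem?_add_mod (by omega), Nat.add_sub_cancel' hsx]
  refine hmin d hd (hlen ▸ hdp) fun x hsx hxe => ?_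
  rw [hu x hsx (by omega), hu (x + d) (by omega) hxe]
  conv_lhs => rw [← hrot]
  rw [List.getElem?_rotate (by rw [hlen]; exact Nat.mod_lt _ (by omega)), hlen, Nat.mod_add_mod,
    Nat.sub_add_comm hsx]

theorem PeriodicOn.le_of_ne_left {w : List α} {s e s' t p : ℕ} (h : PeriodicOn w s e p)
    (hs't : s' ≤ t) (hte : t + p ≤ e) (hleft : s' = 0 ∨ w[s' - 1]? ≠ w[s' - 1 + p]?) :
    s' ≤ s := by
  by_contra! hss'
  exact hleft.resolve_left (by omega) (h _ (by omega) (by omega))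

theorem PeriodicOn.le_of_ne_right {w : List α} {s e e' t p : ℕ} (h : PeriodicOn w s e p)
    (hst : s ≤ t) (hte' : t + p ≤ e') (hright : w[e']? ≠ w[e' - p]?) : e ≤ e' := by
  by_contra! he'e
  have := h (e' - p) (by omega) (by omega)
  rw [Nat.sub_add_cancel (by omega)] at this
  exact hright this.symm

end Periodicity

section LyndonRoots

variable {α : Type*} [LinearOrder α]

/-- The letter at the 0-indexed position `e`, if there is one, is smaller than the letter `p`
positions earlier. For a run `[i..j]` (1-indexed) this is used with `e = j`, the position just
after the run. -/
def EndsLow (w : List α) (e p : ℕ) : Prop :=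
  ∀ a b, w[e]? = some a → w[e - p]? = some b → a < b

theorem PeriodicOn.not_isLyndon_drop_take {w : List α} {s e t p ℓ : ℕ}
    (h : PeriodicOn w s e p) (hp : 0 < p) (hst : s ≤ t) (hte : t + p ≤ e)
    (hlow : EndsLow w e p) (hpℓ : p < ℓ)
    (hℓ : t + ℓ ≤ w.length) : ¬ ((w.drop t).take ℓ).IsLyndon := by
  intro hly
  rcases le_or_gt (t + ℓ) e with hℓe | heℓ
  · refine hly.not_hasPeriod hp (by simp; omega) (hasPeriod_drop_take_iff.2 ?_)
    exact h.mono hst (by omega)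
  · have hD : HasPeriod (((w.drop t).take ℓ).take (e - t)) p := by
      rw [List.take_take, min_eq_left (by omega), hasPeriod_drop_take_iff]
      exact h.mono hst (by omega)
    refine hly.not_lt_of_hasPeriod_take hp (by omega) hD ?_ ?_
      (hlow _ _ (List.getElem?_eq_getElem (by omega)) (List.getElem?_eq_getElem (by omega)))
    · rw [List.getElem?_take_of_lt (by omega), List.getElem?_drop,
        Nat.add_sub_cancel' (by omega : t ≤ e), List.getElem?_eq_getElem]
    · rw [List.getElem?_take_of_lt (by omega), List.getElem?_drop,
        show t + (e - t - p) = e - p by omega, List.getElem?_eq_getElem]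

theorem PeriodicOn.exists_lyndonPrefixLength_eq {w : List α} {s e p : ℕ}
    (h : PeriodicOn w s e p) (hmin : ∀ q, 0 < q → q < p → ¬ PeriodicOn w s e q) (hp : 0 < p)
    (hpe : s + 2 * p ≤ e) (he : e ≤ w.length)
    (hlow : EndsLow w e p) :
    ∃ t, s ≤ t ∧ t + p ≤ e ∧ (w.drop t).lyndonPrefixLength = p := by
  set u := (w.drop s).take p
  have hlen : u.length = p := by simp [u]; omega
  obtain ⟨d, hd, hdmin⟩ := Finset.exists_min_image (Finset.range p) u.rotate ⟨0, by simpa⟩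
  rw [Finset.mem_range] at hd
  have hroot : (w.drop (s + d)).take p = u.rotate d := h.drop_take_eq_rotate hd (by omega) he
  have hly : (u.rotate d).IsLyndon :=
    ((h.isPrimitive_drop_take hmin (by omega) he).rotate d).isLyndon_of_forall_le_rotate
      fun k => by
        rw [List.rotate_rotate, ← List.rotate_mod u (d + k), hlen]
        exact hdmin _ (Finset.mem_range.2 (Nat.mod_lt _ hp))
  refine ⟨s + d, by omega, by omega, List.lyndonPrefixLength_eq (by simp; omega) (hroot ▸ hly)
    fun ℓ hpℓ hℓ => ?_⟩
  exact h.not_isLyndon_drop_take hp (by omega) (by omega) hlow hpℓ (by simp at hℓ; omega)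

end LyndonRoots

section Runs

variable {α : Type*}

theorem PeriodicOn.extend_left {w : List α} {s e p : ℕ} (h : PeriodicOn w (s + 1) e p)
    (hs : w[s]? = w[s + p]?) : PeriodicOn w s e p := fun x hsx hxe => by
  rcases eq_or_lt_of_le hsx with rfl | hsx
  · exact hs
  · exact h x hsx hxe

theorem PeriodicOn.extend_right {w : List α} {s e p : ℕ} (h : PeriodicOn w s e p) (hpe : p ≤ e)
    (he : w[e - p]? = w[e]?) : PeriodicOn w s (e + 1) p := fun x hsx hxe => by
  rcases lt_or_eq_of_le (Nat.le_of_lt_succ hxe) with hxe | hxe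
  · exact h x hsx hxe
  · rwa [hxe, show x = e - p by omega]

theorem IsRun.periodicOn {w : List α} {i j p : ℕ} (h : IsRun w i j p) :
    PeriodicOn w (i - 1) j p := by
  obtain ⟨hi, hij, hj, -, hper, -⟩ := h
  rwa [hasPeriod_substr_iff hi hij, min_eq_left hj] at hper

theorem IsRun.not_periodicOn {w : List α} {i j p : ℕ} (h : IsRun w i j p) :
    ∀ q, 0 < q → q < p → ¬ PeriodicOn w (i - 1) j q := by
  obtain ⟨hi, hij, hj, -, -, hmin, -⟩ := h
  intro q hq hqp
  rw [← min_eq_left hj, ← hasPeriod_substr_iff hi hij]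
  exact hmin q hq hqp

theorem IsRun.left_maximal {w : List α} {i j p : ℕ} (h : IsRun w i j p) :
    i - 1 = 0 ∨ w[i - 1 - 1]? ≠ w[i - 1 - 1 + p]? := by
  have hper := h.periodicOn
  obtain ⟨hi, hij, hj, -, -, -, -, hleft, -⟩ := h
  rcases eq_or_lt_of_le hi with rfl | hi
  · exact .inl rfl
  refine .inr fun hext => hleft.resolve_left (by omega) ?_
  rw [hasPeriod_substr_iff (by omega) (by omega), min_eq_left hj]
  exact PeriodicOn.extend_left (by rwa [Nat.sub_add_cancel (by omega : 1 ≤ i - 1)]) hext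

theorem IsRun.right_maximal {w : List α} {i j p : ℕ} (h : IsRun w i j p) :
    w[j]? ≠ w[j - p]? := by
  have hper := h.periodicOn
  obtain ⟨hi, hij, hj, hp, -, -, h2p, -, hright⟩ := h
  rcases lt_or_eq_of_le hj with hj | rfl
  · intro hext
    refine hright.resolve_left hj.ne ?_
    rw [hasPeriod_substr_iff hi (by omega), min_eq_left hj]
    exact hper.extend_right (by omega) hext.symm
  · rw [List.getElem?_eq_none le_rfl, List.getElem?_eq_getElem (by omega)]
    exact (Option.some_ne_none _).symm

theorem IsRun.eq_of_overlap {w : List α} {i j i' j' p t : ℕ} (h : IsRun w i j p)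
    (h' : IsRun w i' j' p) (ht : i - 1 ≤ t) (htj : t + p ≤ j) (ht' : i' - 1 ≤ t)
    (htj' : t + p ≤ j') : i = i' ∧ j = j' := by
  have hi := h.1
  have hi' := h'.1
  have := h.periodicOn.le_of_ne_left ht' htj h'.left_maximal
  have := h'.periodicOn.le_of_ne_left ht htj' h.left_maximal
  have := h.periodicOn.le_of_ne_right ht htj' h'.right_maximal
  have := h'.periodicOn.le_of_ne_right ht' htj h.right_maximal
  omega

theorem hasPeriod_map_iff {β : Type*} {f : α → β} (hf : Function.Injective f) {l : List α}
    {p : ℕ} : HasPeriod (l.map f) p ↔ HasPeriod l p := by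
  simp only [HasPeriod, List.length_map, List.getElem?_map, (Option.map_injective hf).eq_iff]

theorem isRun_map_iff {β : Type*} {f : α → β} (hf : Function.Injective f) {w : List α}
    {i j p : ℕ} : IsRun (w.map f) i j p ↔ IsRun w i j p := by
  simp only [IsRun, substr, ← List.map_drop, ← List.map_take, hasPeriod_map_iff hf,
    List.length_map]

end Runs

section Counting

variable {α : Type*} [LinearOrder α]

theorem IsRun.exists_lyndonPrefixLength_eq {w : List α} {i j p : ℕ} (h : IsRun w i j p)
    (hlow : EndsLow w j p) :
    ∃ t, i - 1 ≤ t ∧ t + p ≤ j ∧ (w.drop t).lyndonPrefixLength = p := by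
  have hper := h.periodicOn
  have hmin := h.not_periodicOn
  obtain ⟨hi, -, hj, hp, -, -, h2p, -⟩ := h
  exact hper.exists_lyndonPrefixLength_eq hmin hp (by omega) hj hlow

def runsEndingLow (w : List α) : Set (ℕ × ℕ) :=
  {ij | ∃ p, IsRun w ij.1 ij.2 p ∧ EndsLow w ij.2 p}

theorem exists_injOn_runsEndingLow (w : List α) :
    ∃ f : ℕ × ℕ → ℕ, Set.MapsTo f (runsEndingLow w) (Set.Iio w.length) ∧
      Set.InjOn f (runsEndingLow w) := by
  have hroot : ∀ ij ∈ runsEndingLow w, ∃ t p, IsRun w ij.1 ij.2 p ∧ ij.1 - 1 ≤ t ∧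
      t + p ≤ ij.2 ∧ (w.drop t).lyndonPrefixLength = p := by
    rintro ij ⟨p, h, hlow⟩
    obtain ⟨t, ht⟩ := h.exists_lyndonPrefixLength_eq hlow
    exact ⟨t, p, h, ht⟩
  choose! f p hf using hroot
  refine ⟨f, fun ij hij => ?_, fun ij hij ij' hij' heq => ?_⟩
  · obtain ⟨⟨-, -, hj, hp, -⟩, -, htj, -⟩ := hf ij hij
    exact Set.mem_Iio.2 (by omega)
  · obtain ⟨h, ht, htj, hlen⟩ := hf ij hij
    obtain ⟨h', ht', htj', hlen'⟩ := hf ij' hij'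
    rw [← heq, hlen] at hlen'
    rw [← hlen'] at h' htj'
    rw [← heq] at ht' htj'
    exact Prod.ext_iff.2 (h.eq_of_overlap h' ht htj ht' htj')

theorem runsEndingLow_finite (w : List α) : (runsEndingLow w).Finite :=
  have ⟨_, hf, hinj⟩ := exists_injOn_runsEndingLow w
  (Set.finite_Iio _).of_injOn hf hinj

theorem ncard_runsEndingLow_le (w : List α) : (runsEndingLow w).ncard ≤ w.length := by
  obtain ⟨f, hf, hinj⟩ := exists_injOn_runsEndingLow w
  calc (runsEndingLow w).ncard ≤ (Set.Iio w.length).ncard :=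
        Set.ncard_le_ncard_of_injOn f hf hinj (Set.finite_Iio _)
    _ = w.length := by rw [← Finset.coe_range, Set.ncard_coe_finset, Finset.card_range]

theorem setOf_isRun_subset_union (w : List α) :
    {ij : ℕ × ℕ | ∃ p, IsRun w ij.1 ij.2 p} ⊆
      runsEndingLow w ∪ runsEndingLow (w.map OrderDual.toDual) := by
  rintro ⟨i, j⟩ ⟨p, h⟩
  by_cases hlow : EndsLow w j p
  · exact .inl ⟨p, h, hlow⟩
  simp only [EndsLow, not_forall, not_lt] at hlow
  obtain ⟨a, b, ha, hb, hba⟩ := hlow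
  have hab : a ≠ b := fun hab => h.right_maximal (by rw [ha, hb, hab])
  refine .inr ⟨p, (isRun_map_iff OrderDual.toDual.injective).2 h, fun a' b' ha' hb' => ?_⟩
  simp only [List.getElem?_map, ha, hb, Option.map_some, Option.some_inj] at ha' hb'
  rw [← ha', ← hb', OrderDual.toDual_lt_toDual]
  exact lt_of_le_of_ne hba hab.symm

end Counting

/-- The number of runs in a string of length `n` is at most `2n`. -/
theorem stmt8 {α : Type*} [LinearOrder α] (w : List α) :
    Set.ncard {ij : ℕ × ℕ | ∃ p, IsRun w ij.1 ij.2 p} ≤ 2 * w.length := by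
  set dual := w.map OrderDual.toDual
  calc Set.ncard {ij : ℕ × ℕ | ∃ p, IsRun w ij.1 ij.2 p}
      ≤ (runsEndingLow w ∪ runsEndingLow dual).ncard :=
        Set.ncard_le_ncard (setOf_isRun_subset_union w)
          ((runsEndingLow_finite w).union (runsEndingLow_finite dual))
    _ ≤ (runsEndingLow w).ncard + (runsEndingLow dual).ncard := Set.ncard_union_le _ _
    _ ≤ w.length + w.length := add_le_add (ncard_runsEndingLow_le w)
        ((ncard_runsEndingLow_le dual).trans_eq (List.length_map _))
    _ = 2 * w.length := (two_mul _).symm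
end

section
/- For any node v of a trie with an ancestor chain, if w_v denotes the string read from v to the auxiliary root ⊥, k = min{ k' > 1 : w_v[k'] ≠ w_v[1] }, and ℓ ∈ {0,1} satisfies w_v[k] ≺_ℓ w_v[1], then the longest Lyndon word prefix of w_v with respect to ≺_ℓ has length 1, and the longest Lyndon word prefix of w_v with respect to ≺_{1-ℓ} has length at least k. -/
/-!
With `a = w_v[1]` and `b = w_v[k]`, the prefix of length `k` is `a^(k-1) b`. A Lyndon word
is smaller than each of its suffixes, so its first letter is strictly smaller than its last
letter and no later letter is strictly smaller than its first. A longer `≺_ℓ`-Lyndon prefix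
would therefore either be a power of `a` or contain `b ≺_ℓ a` after its first letter.
On the other hand `a^(k-1) b` is a `≺_{1-ℓ}`-Lyndon word, since `a ≺_{1-ℓ} b` makes each
suffix `a^(k-1-i) b` larger than it.
-/

/-- A trie with `n` edges: nodes are `0, …, n` with root `0`; every non-root node `v`
has a parent `parent v < v`, and the edge from `v` to its parent is labeled `label v`.
Edges from a node to its distinct children have distinct labels. -/
structure Trie (α : Type*) where
  n : ℕ
  parent : Fin (n + 1) → Fin (n + 1)
  label : Fin (n + 1) → α
  root_fixed : parent 0 = 0
  parent_lt : ∀ v : Fin (n + 1), v ≠ 0 → parent v < v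
  labels_distinct : ∀ u v : Fin (n + 1), u ≠ 0 → v ≠ 0 →
    parent u = parent v → label u = label v → u = v

/-- `strUp T k u` is the string of edge labels read along the path of length `k`
from `u` towards the root, i.e. `str(u, parentᵏ u)`. -/
def strUp {α : Type*} (T : Trie α) : ℕ → Fin (T.n + 1) → List α
  | 0, _ => []
  | k + 1, u => T.label u :: strUp T k (T.parent u)


namespace List

variable {α : Type*}

theorem take_succ_eq_replicate_append_singleton {w : List α} {n : ℕ} {a : α}
    (hn : n < w.length) (hconst : ∀ j (hj : j < n), w[j] = a) :
    w.take (n + 1) = replicate n a ++ [w[n]] := by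
  rw [take_add_one, getElem?_eq_getElem hn, Option.toList_some]
  congr 1
  refine eq_replicate_iff.2 ⟨by simp; omega, fun x hx => ?_⟩
  obtain ⟨j, hj, rfl⟩ := mem_iff_getElem.1 hx
  simp only [length_take] at hj
  simpa using hconst j (by omega)

theorem lex_replicate_append_singleton {lt : α → α → Prop} {a b : α} (hab : lt a b) :
    ∀ {m n : ℕ}, m < n → Lex lt (replicate n a ++ [b]) (replicate m a ++ [b])
  | 0, _ + 1, _ => Lex.rel hab
  | _ + 1, _ + 1, hmn => Lex.cons (lex_replicate_append_singleton hab (by omega))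

end List

section Lyndon

variable {α : Type*} {lt : α → α → Prop} {w : List α}

theorem IsLyndonWrt.rel_or_eq_head_getElem (h : IsLyndonWrt lt w) {i : ℕ} (hi0 : 0 < i)
    (hi : i < w.length) : lt w[0] w[i] ∨ w[0] = w[i] := by
  have hlex := h.2 i hi0 hi
  rw [List.drop_eq_getElem_cons hi] at hlex
  cases w with
  | nil => simp at hi
  | cons x t => exact (List.cons_lex_cons_iff.1 hlex).imp_right And.left

theorem IsLyndonWrt.not_rel_getElem_head [Std.Asymm lt] (h : IsLyndonWrt lt w) {i : ℕ}
    (hi0 : 0 < i) (hi : i < w.length) : ¬ lt w[i] w[0] := by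
  rcases h.rel_or_eq_head_getElem hi0 hi with hlt | heq
  · exact asymm hlt
  · rw [heq]
    exact fun hlt => asymm hlt hlt

theorem IsLyndonWrt.rel_head_getLast (h : IsLyndonWrt lt w) (hw : 1 < w.length) :
    lt w[0] w[w.length - 1] := by
  have hlex := h.2 (w.length - 1) (by omega) (by omega)
  rw [List.drop_eq_getElem_cons (by omega), Nat.sub_add_cancel (by omega), List.drop_length]
    at hlex
  cases w with
  | nil => simp at hw
  | cons x t => simpa using List.cons_lex_cons_iff.1 hlex

theorem isLyndonWrt_replicate_append_singleton {a b : α} (hab : lt a b) (n : ℕ) :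
    IsLyndonWrt lt (List.replicate n a ++ [b]) := by
  refine ⟨by simp, fun i hi0 hi => ?_⟩
  simp only [List.length_append, List.length_replicate, List.length_singleton] at hi
  rw [List.drop_append_of_le_length (by simp; omega), List.drop_replicate]
  exact List.lex_replicate_append_singleton hab (by omega)

end Lyndon

section ltOrd

variable {α : Type*} [LinearOrder α]

instance (ℓ : Bool) : Std.Asymm (ltOrd ℓ : α → α → Prop) where
  asymm a b := by cases ℓ <;> exact lt_asymm

theorem ltOrd_not {ℓ : Bool} {a b : α} : ltOrd (!ℓ) a b ↔ ltOrd ℓ b a := by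
  cases ℓ <;> rfl

end ltOrd

theorem stmt15_general {α : Type*} [LinearOrder α] (T : Trie α) (v : Fin (T.n + 1))
    (d : ℕ) (c : α) (k : ℕ) (ℓ : Bool)
    (hk1 : 1 < k) (hk2 : k ≤ (strUp T d v ++ [c]).length)
    (hmin : ∀ k', 1 < k' → k' < k →
      (strUp T d v ++ [c]).getD (k' - 1) c = (strUp T d v ++ [c]).getD 0 c)
    (hℓ : ltOrd ℓ ((strUp T d v ++ [c]).getD (k - 1) c)
                  ((strUp T d v ++ [c]).getD 0 c)) :
    (∀ m, 1 < m → m ≤ (strUp T d v ++ [c]).length →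
      ¬ IsLyndonWrt (ltOrd ℓ) ((strUp T d v ++ [c]).take m)) ∧
    (∃ m, k ≤ m ∧ m ≤ (strUp T d v ++ [c]).length ∧
      IsLyndonWrt (ltOrd (!ℓ)) ((strUp T d v ++ [c]).take m)) := by
  set w := strUp T d v ++ [c]
  have hpos : 0 < w.length := by omega
  have hk : k - 1 < w.length := by omega
  rw [List.getD_eq_getElem w c hk, List.getD_eq_getElem w c hpos] at hℓ
  have hconst : ∀ j (hj : j < k - 1), w[j] = w[0] := by
    rintro (_ | j) hj
    · rfl
    · have h : w.getD (j + 1) c = w.getD 0 c := hmin (j + 2) (by omega) (by omega)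
      rwa [List.getD_eq_getElem w c (by omega), List.getD_eq_getElem w c hpos] at h
  refine ⟨fun m hm1 hm hlyn => ?_, k, le_rfl, hk2, ?_⟩
  · rcases le_or_gt m (k - 1) with hmk | hkm
    · have hlast := hlyn.rel_head_getLast (by simp; omega)
      simp only [List.getElem_take, List.length_take, min_eq_left hm,
        hconst (m - 1) (by omega)] at hlast
      exact asymm hlast hlast
    · have hb := hlyn.not_rel_getElem_head (i := k - 1) (by omega) (by simp; omega)
      simp only [List.getElem_take] at hb
      exact hb hℓ
  · rw [show k = k - 1 + 1 by omega, List.take_succ_eq_replicate_append_singleton hk hconst]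
    exact isLyndonWrt_replicate_append_singleton (ltOrd_not.2 hℓ) _

/-- For a node `v` of a trie at depth `d`, let `w_v = str(v, ⊥)` be the label string
read from `v` up to the auxiliary parent `⊥` of the root, whose edge label `c` occurs
nowhere else in the trie. If `k = min {k' > 1 : w_v[k'] ≠ w_v[1]}` (1-indexed) and
`ℓ` is such that `w_v[k] ≺_ℓ w_v[1]`, then the longest Lyndon prefix of `w_v` w.r.t.
`≺_ℓ` has length 1, and the longest Lyndon prefix of `w_v` w.r.t. `≺_{1-ℓ}` has
length at least `k`. -/
theorem stmt15 {α : Type*} [LinearOrder α] (T : Trie α) (v : Fin (T.n + 1))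
    (d : ℕ) (c : α) (k : ℕ) (ℓ : Bool)
    (hd : (T.parent)^[d] v = 0) (hpath : ∀ m, m < d → (T.parent)^[m] v ≠ 0)
    (hc : ∀ u : Fin (T.n + 1), u ≠ 0 → T.label u ≠ c)
    (hk1 : 1 < k) (hk2 : k ≤ (strUp T d v ++ [c]).length)
    (hne : (strUp T d v ++ [c]).getD (k - 1) c ≠ (strUp T d v ++ [c]).getD 0 c)
    (hmin : ∀ k', 1 < k' → k' < k →
      (strUp T d v ++ [c]).getD (k' - 1) c = (strUp T d v ++ [c]).getD 0 c)
    (hℓ : ltOrd ℓ ((strUp T d v ++ [c]).getD (k - 1) c)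
                  ((strUp T d v ++ [c]).getD 0 c)) :
    (∀ m, 1 < m → m ≤ (strUp T d v ++ [c]).length →
      ¬ IsLyndonWrt (ltOrd ℓ) ((strUp T d v ++ [c]).take m)) ∧
    (∃ m, k ≤ m ∧ m ≤ (strUp T d v ++ [c]).length ∧
      IsLyndonWrt (ltOrd (!ℓ)) ((strUp T d v ++ [c]).take m)) :=
  stmt15_general T v d c k ℓ hk1 hk2 hmin hℓ
end

section
/- In a trie, a given L-root uniquely determines its run: if y = str(v_i, v_j) is a Lyndon word of length p occurring on a root-directed path of a trie, then there is at most one run with period p whose L-root occurrence is y; i.e., the maximal extension of the periodicity p in both directions (towards root and towards leaves along the path through v_i) from the occurrence of y is uniquely determined. -/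
/-- `(v, k)` is a run of the trie `T` with (smallest) period `p`: the path of length
`k` from `v` towards the root is a genuine path (not passing beyond the root), `p` is
the smallest period of its label string, the exponent is at least `2`, and the
periodicity extends neither towards the root (the auxiliary parent `⊥` of the root
carries a distinct label) nor towards the leaves (to any child of `v`). -/
def TrieRun {α : Type*} (T : Trie α) (v : Fin (T.n + 1)) (k p : ℕ) : Prop :=
  0 < p ∧ 2 * p ≤ k ∧ (∀ m, m < k → (T.parent)^[m] v ≠ 0) ∧
  HasPeriod (strUp T k v) p ∧
  (∀ q, 0 < q → q < p → ¬ HasPeriod (strUp T k v) q) ∧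
  ((T.parent)^[k] v = 0 ∨ ¬ HasPeriod (strUp T (k + 1) v) p) ∧
  (∀ u : Fin (T.n + 1), u ≠ 0 → T.parent u = v → ¬ HasPeriod (strUp T (k + 1) u) p)

/-!
Everything happens on the root-directed path through `vi`, whose label sequence has period `p`.
Towards the root the path is forced, so a run starting at a given node is exactly as long as
periodicity allows. Towards the leaves, a node `x` below `vi` satisfies
`label x = label (parentᵖ x)` and distinct siblings carry distinct labels, so `x` is determined
by its parent: two periodic paths reaching at least one period above `vi` agree below it. If one
run started strictly below the other, the child of the higher start on that path would extend
the higher run towards the leaves, against its maximality.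
-/
lemma strUp_length {α : Type*} (T : Trie α) :
    ∀ (k : ℕ) (u : Fin (T.n + 1)), (strUp T k u).length = k
  | 0, _ => rfl
  | k + 1, u => by simp [strUp, strUp_length T k]

lemma strUp_getElem? {α : Type*} (T : Trie α) :
    ∀ {k i : ℕ} (u : Fin (T.n + 1)), i < k →
      (strUp T k u)[i]? = some (T.label (T.parent^[i] u))
  | _ + 1, 0, _, _ => rfl
  | _ + 1, _ + 1, u, h => strUp_getElem? T (T.parent u) (Nat.lt_of_succ_lt_succ h)

lemma hasPeriod_strUp_iff {α : Type*} (T : Trie α) (k p : ℕ) (u : Fin (T.n + 1)) :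
    HasPeriod (strUp T k u) p ↔
      ∀ i, i + p < k → T.label (T.parent^[i] u) = T.label (T.parent^[i + p] u) := by
  simp only [HasPeriod, strUp_length]
  refine forall_congr' fun i => imp_congr_right fun hi => ?_
  rw [strUp_getElem? T u (by omega), strUp_getElem? T u hi, Option.some_inj]

namespace Trie

variable {α : Type*} (T : Trie α)

def IsPeriodicPath (u : Fin (T.n + 1)) (k p : ℕ) : Prop :=
  (∀ m < k, T.parent^[m] u ≠ 0) ∧
    ∀ i, i + p < k → T.label (T.parent^[i] u) = T.label (T.parent^[i + p] u)

variable {T}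

theorem eq_of_parent_eq_of_label_periodic {x y : Fin (T.n + 1)} {p : ℕ} (hp : 0 < p)
    (hx : x ≠ 0) (hy : y ≠ 0) (hxy : T.parent x = T.parent y)
    (hlx : T.label x = T.label (T.parent^[p] x)) (hly : T.label y = T.label (T.parent^[p] y)) :
    x = y := by
  obtain ⟨q, rfl⟩ := Nat.exists_eq_succ_of_ne_zero hp.ne'
  refine T.labels_distinct x y hx hy hxy ?_
  rw [hlx, hly, Function.iterate_succ_apply, Function.iterate_succ_apply, hxy]

namespace IsPeriodicPath

variable {u : Fin (T.n + 1)} {k p : ℕ}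

theorem mono (h : T.IsPeriodicPath u k p) {k' : ℕ} (hk : k' ≤ k) : T.IsPeriodicPath u k' p :=
  ⟨fun m hm => h.1 m (by omega), fun i hi => h.2 i (by omega)⟩

theorem iterate (h : T.IsPeriodicPath u k p) (d : ℕ) :
    T.IsPeriodicPath (T.parent^[d] u) (k - d) p := by
  refine ⟨fun m hm => ?_, fun i hi => ?_⟩
  · rw [← Function.iterate_add_apply]
    exact h.1 (m + d) (by omega)
  · rw [← Function.iterate_add_apply, ← Function.iterate_add_apply, Nat.add_right_comm]
    exact h.2 (i + d) (by omega)

theorem label_eq_label_iterate (h : T.IsPeriodicPath u k p) (hpk : p < k) :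
    T.label u = T.label (T.parent^[p] u) := by
  simpa using h.2 0 (by omega)

theorem of_parent {c : Fin (T.n + 1)} (hc : c ≠ 0) (h : T.IsPeriodicPath (T.parent c) k p)
    (hl : T.label c = T.label (T.parent^[p] c)) : T.IsPeriodicPath c (k + 1) p := by
  refine ⟨fun m hm => ?_, fun i hi => ?_⟩
  · cases m with
    | zero => exact hc
    | succ m => exact h.1 m (by omega)
  · cases i with
    | zero => simpa using hl
    | succ i =>
      rw [Nat.add_right_comm]
      exact h.2 i (by omega)

theorem eq_of_iterate_eq {w : Fin (T.n + 1)} {k' a : ℕ} (hp : 0 < p)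
    (hu : T.IsPeriodicPath u k p) (hw : T.IsPeriodicPath w k' p)
    (huw : T.parent^[a] u = T.parent^[a] w) (hak : a + p ≤ k) (hak' : a + p ≤ k') : u = w := by
  induction a generalizing u w k k' with
  | zero => exact huw
  | succ a ih =>
    have hpar : T.parent u = T.parent w :=
      ih (hu.iterate 1) (hw.iterate 1) huw (by omega) (by omega)
    exact eq_of_parent_eq_of_label_periodic hp (hu.1 0 (by omega)) (hw.1 0 (by omega)) hpar
      (hu.label_eq_label_iterate (by omega)) (hw.label_eq_label_iterate (by omega))

end IsPeriodicPath

end Trie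

namespace TrieRun

variable {α : Type*} {T : Trie α} {u : Fin (T.n + 1)} {k p : ℕ}

theorem isPeriodicPath (h : TrieRun T u k p) : T.IsPeriodicPath u k p :=
  ⟨h.2.2.1, (hasPeriod_strUp_iff T k p u).1 h.2.2.2.1⟩

theorem le_of_isPeriodicPath (h : TrieRun T u k p) {k' : ℕ} (h' : T.IsPeriodicPath u k' p) :
    k' ≤ k := by
  by_contra! hlt
  have hext := h'.mono (Nat.succ_le_of_lt hlt)
  rcases h.2.2.2.2.2.1 with hroot | hnot
  · exact hext.1 k k.lt_succ_self hroot
  · exact hnot ((hasPeriod_strUp_iff T (k + 1) p u).2 hext.2)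

theorem length_unique {k' : ℕ} (h : TrieRun T u k p) (h' : TrieRun T u k' p) : k = k' :=
  le_antisymm (h'.le_of_isPeriodicPath h.isPeriodicPath) (h.le_of_isPeriodicPath h'.isPeriodicPath)

theorem not_isPeriodicPath_child (h : TrieRun T u k p) {c : Fin (T.n + 1)} (hc : c ≠ 0)
    (hcu : T.parent c = u) : ¬ T.IsPeriodicPath c (k + 1) p := fun h' =>
  h.2.2.2.2.2.2 c hc hcu ((hasPeriod_strUp_iff T (k + 1) p c).2 h'.2)

theorem depth_le (h : TrieRun T u k p) {w : Fin (T.n + 1)} {k' a a' : ℕ}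
    (hw : T.IsPeriodicPath w k' p) (hak : a + p ≤ k) (hak' : a' + p ≤ k')
    (hv : T.parent^[a] u = T.parent^[a'] w) : a' ≤ a := by
  by_contra! hlt
  obtain ⟨d, rfl⟩ := Nat.exists_eq_add_of_lt hlt
  set c := T.parent^[d] w
  have hc : T.IsPeriodicPath c (k' - d) p := hw.iterate d
  have hcu : T.parent c = u := by
    refine (Trie.IsPeriodicPath.eq_of_iterate_eq h.1 h.isPeriodicPath (hc.iterate 1) ?_ hak
      (by omega)).symm
    rw [hv, ← Function.iterate_add_apply, ← Function.iterate_add_apply]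
    ring_nf
  have hu : T.IsPeriodicPath u k p := h.isPeriodicPath
  rw [← hcu] at hu
  exact h.not_isPeriodicPath_child (hc.1 0 (by omega)) hcu
    (hu.of_parent (hc.1 0 (by omega)) (hc.label_eq_label_iterate (by omega)))

end TrieRun

theorem stmt19_general {α : Type*} (T : Trie α) (vi : Fin (T.n + 1)) (p : ℕ)
    (u₁ u₂ : Fin (T.n + 1)) (k₁ k₂ a₁ a₂ : ℕ)
    (hr1 : TrieRun T u₁ k₁ p) (hr2 : TrieRun T u₂ k₂ p)
    (ha1 : (T.parent)^[a₁] u₁ = vi) (hb1 : a₁ + p ≤ k₁)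
    (ha2 : (T.parent)^[a₂] u₂ = vi) (hb2 : a₂ + p ≤ k₂) :
    u₁ = u₂ ∧ k₁ = k₂ := by
  have hv : (T.parent)^[a₁] u₁ = (T.parent)^[a₂] u₂ := ha1.trans ha2.symm
  obtain rfl : a₁ = a₂ :=
    le_antisymm (hr2.depth_le hr1.isPeriodicPath hb2 hb1 hv.symm)
      (hr1.depth_le hr2.isPeriodicPath hb1 hb2 hv)
  obtain rfl : u₁ = u₂ :=
    hr1.isPeriodicPath.eq_of_iterate_eq hr1.1 hr2.isPeriodicPath hv hb1 hb2
  exact ⟨rfl, hr1.length_unique hr2⟩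

/-- In a trie, a given occurrence of an L-root determines its run uniquely: if
`y = str(v_i, v_j)` is a Lyndon word of length `p` on a root-directed path, then
there is at most one run with period `p` containing this occurrence of `y`, since
the maximal extension of the periodicity `p` in both directions is uniquely
determined (towards the root parents are unique; towards the leaves next characters
are unique because sibling edges carry distinct labels). -/
theorem stmt19 {α : Type*} [LinearOrder α] (T : Trie α) (vi : Fin (T.n + 1)) (p : ℕ)
    (hp : 0 < p) (hpath : ∀ m, m < p → (T.parent)^[m] vi ≠ 0)
    (hLyn : IsLyndon (strUp T p vi))
    (u₁ u₂ : Fin (T.n + 1)) (k₁ k₂ a₁ a₂ : ℕ)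
    (hr1 : TrieRun T u₁ k₁ p) (hr2 : TrieRun T u₂ k₂ p)
    (ha1 : (T.parent)^[a₁] u₁ = vi) (hb1 : a₁ + p ≤ k₁)
    (ha2 : (T.parent)^[a₂] u₂ = vi) (hb2 : a₂ + p ≤ k₂) :
    u₁ = u₂ ∧ k₁ = k₂ :=
  stmt19_general T vi p u₁ u₂ k₁ k₂ a₁ a₂ hr1 hr2 ha1 hb1 ha2 hb2
end
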